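/- (Global to local.) Let θ_k < θ_j < θ_i be real types with allocations x_i, x_j, x_k ∈ X and transfers t_i, t_j, t_k ∈ ℝ. If the constraints IC[i→k] and IC[j→k] hold with equality (bind) and x_j ≤ x_k, then IC[i→j] holds. -/

import Mathlib

theorem sub_le_sub_of_strict_increasing_differences {X : Set ℝ} {u : ℝ → ℝ → ℝ}
    (hSID : ∀ x ∈ X, ∀ x' ∈ X, x < x' → ∀ θ θ' : ℝ, θ < θ' →
      u x' θ - u x θ < u x' θ' - u x θ')
    {x x' : ℝ} (hx : x ∈ X) (hx' : x' ∈ X) (hxx' : x ≤ x') {θ θ' : ℝ} (hθθ' : θ < θ') :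
    u x' θ - u x θ ≤ u x' θ' - u x θ' := by
  rcases hxx'.lt_or_eq with hlt | rfl
  · exact (hSID x hx x' hx' hlt θ θ' hθθ').le
  · simp

theorem stmt9
    (X : Set ℝ) (u : ℝ → ℝ → ℝ)
    (hSID : ∀ x ∈ X, ∀ x' ∈ X, x < x' → ∀ θ θ' : ℝ, θ < θ' →
      u x' θ - u x θ < u x' θ' - u x θ')
    (θi θj : ℝ) (hji : θj < θi)
    (xi xj xk : ℝ) (hxj : xj ∈ X) (hxk : xk ∈ X)
    (ti tj tk : ℝ)
    (hICik : u xi θi - ti = u xk θi - tk)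
    (hICjk : u xj θj - tj = u xk θj - tk)
    (hx : xj ≤ xk) :
    u xi θi - ti ≥ u xj θi - tj := by
  -- Eliminating `ti` and `tj` with the two bindings turns IC[i→j] into
  -- `u xk θj - u xj θj ≤ u xk θi - u xj θi`.
  have hID := sub_le_sub_of_strict_increasing_differences hSID hxj hxk hx hji
  linarith
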